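/- arXiv:2404.15917 — 7 statements merged into one kernel-verified Lean document; each statement's English description precedes it below -/
import Mathlib

section
/- Let I be a finite set, let w, h : I → ℕ assign to each element a positive width and positive height, and let W, m ∈ ℕ be positive. Then the Demand Strip Packing instance (I, w, h, W) admits a packing with peak height at most m if and only if the Parallel Task Scheduling instance with job set I, processing times p = w, machine requirements q = h, and m machines admits a feasible schedule with makespan at most W. -/
/-!
Given a schedule, the jobs running at time `k` pairwise overlap, so their machine sets are
disjoint subsets of `Fin m` and their demands sum to at most `m`. Conversely, given a packing,
assign machines greedily in order of increasing start time: when job `a` starts, every earlier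
job still running is active at time `σ a` together with `a`, so the peak bound at `σ a` leaves
at least `h a` machines unused by them.
-/

open Finset

section

variable {ι : Type*}

def Overlap (σ w : ι → ℕ) (j j' : ι) : Prop := σ j < σ j' + w j' ∧ σ j' < σ j + w j

lemma Overlap.symm {σ w : ι → ℕ} {j j' : ι} (h : Overlap σ w j j') : Overlap σ w j' j :=
  And.symm h

lemma overlap_of_active {σ w : ι → ℕ} {k : ℕ} {j j' : ι} (hj : σ j ≤ k ∧ k < σ j + w j)
    (hj' : σ j' ≤ k ∧ k < σ j' + w j') : Overlap σ w j j' :=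
  ⟨hj.1.trans_lt hj'.2, hj'.1.trans_lt hj.2⟩

lemma sum_card_le_card_of_pairwiseDisjoint {α : Type*} [Fintype α] {s : Finset ι}
    {f : ι → Finset α} (hf : (s : Set ι).PairwiseDisjoint f) :
    ∑ i ∈ s, #(f i) ≤ Fintype.card α := by
  classical
  exact (card_biUnion hf).symm.trans_le (card_le_univ _)

lemma exists_card_eq_disjoint_of_sum_card_add_le {α : Type*} [Fintype α] [DecidableEq α]
    {T : Finset ι} {f : ι → Finset α} {n : ℕ} (hn : ∑ j ∈ T, #(f j) + n ≤ Fintype.card α) :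
    ∃ S : Finset α, #S = n ∧ ∀ j ∈ T, Disjoint S (f j) := by
  have hfree : n ≤ #(T.biUnion f)ᶜ := by
    have := card_biUnion_le (s := T) (t := f)
    rw [card_compl]
    omega
  obtain ⟨S, hS, hcard⟩ := exists_subset_card_eq hfree
  refine ⟨S, hcard, fun j hj => disjoint_left.mpr fun x hxS hxf => ?_⟩
  exact mem_compl.mp (hS hxS) (mem_biUnion.mpr ⟨j, hj, hxf⟩)

lemma sum_running_add_le_sum_active [Fintype ι] {σ w : ι → ℕ} (h : ι → ℕ) {a : ι}
    (hwa : 0 < w a) {s : Finset ι} (has : a ∉ s) (hmax : ∀ j ∈ s, σ j ≤ σ a) :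
    ∑ j ∈ s.filter (fun j => σ a < σ j + w j), h j + h a ≤
      ∑ j ∈ univ.filter (fun j => σ j ≤ σ a ∧ σ a < σ j + w j), h j := by
  classical
  rw [add_comm, ← sum_insert (s := s.filter _) fun haT => has (mem_filter.mp haT).1]
  refine sum_le_sum_of_subset fun j hj => ?_
  rcases mem_insert.mp hj with rfl | hj
  · simp [hwa]
  · obtain ⟨hjs, hj⟩ := mem_filter.mp hj
    exact mem_filter.mpr ⟨mem_univ j, hmax j hjs, hj⟩

lemma exists_machine_assignment [Fintype ι] {m : ℕ} (σ w h : ι → ℕ) (hw : ∀ i, 0 < w i)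
    (hload : ∀ i, ∑ j ∈ univ.filter (fun j => σ j ≤ σ i ∧ σ i < σ j + w j), h j ≤ m)
    (s : Finset ι) :
    ∃ ρ : ι → Finset (Fin m), (∀ j ∈ s, #(ρ j) = h j) ∧
      (s : Set ι).Pairwise (fun j j' => Overlap σ w j j' → Disjoint (ρ j) (ρ j')) := by
  classical
  induction s using Finset.induction_on_max_value σ with
  | empty => exact ⟨fun _ => ∅, by simp, by simp⟩
  | insert a s has hmax ih =>
    obtain ⟨ρ, hcard, hdisj⟩ := ih
    set T := s.filter (fun j => σ a < σ j + w j)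
    have hload_a : ∑ j ∈ T, #(ρ j) + h a ≤ Fintype.card (Fin m) := by
      rw [sum_congr rfl fun j hj => hcard j (mem_filter.mp hj).1, Fintype.card_fin]
      exact (sum_running_add_le_sum_active h (hw a) has hmax).trans (hload a)
    obtain ⟨S, hScard, hSdisj⟩ := exists_card_eq_disjoint_of_sum_card_add_le hload_a
    have hρ : ∀ j ∈ s, Function.update ρ a S j = ρ j := fun j hj =>
      Function.update_of_ne (ne_of_mem_of_not_mem hj has) S ρ
    have hdisj_a : ∀ j ∈ s, Overlap σ w a j → Disjoint S (ρ j) := fun j hj hov =>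
      hSdisj j (mem_filter.mpr ⟨hj, hov.1⟩)
    refine ⟨Function.update ρ a S, ?_, ?_⟩
    · intro j hj
      rcases mem_insert.mp hj with rfl | hj
      · simpa using hScard
      · rw [hρ j hj]
        exact hcard j hj
    · rw [coe_insert]
      refine Set.Pairwise.insert_of_notMem has (fun j hj j' hj' hne hov => ?_) fun j hj => ?_
      · rw [hρ j hj, hρ j' hj']
        exact hdisj hj hj' hne hov
      · simp only [Function.update_self, hρ j hj]
        exact ⟨hdisj_a j hj, fun hov => (hdisj_a j hj hov.symm).symm⟩

end

theorem dsp_packing_iff_pts_schedule_general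
    (I : Type*) [Fintype I] (w h : I → ℕ)
    (hw : ∀ i, 0 < w i)
    (W m : ℕ) :
    (∃ lam : I → ℕ,
        (∀ i, lam i + w i ≤ W) ∧
        ∀ k, k < W →
          (∑ i ∈ Finset.univ.filter (fun i => lam i ≤ k ∧ k < lam i + w i), h i) ≤ m)
    ↔
    (∃ (σ : I → ℕ) (ρ : I → Finset (Fin m)),
        (∀ j, σ j + w j ≤ W) ∧
        (∀ j, (ρ j).card = h j) ∧
        ∀ j j', j ≠ j' → σ j < σ j' + w j' → σ j' < σ j + w j →
          Disjoint (ρ j) (ρ j')) := by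
  constructor
  · rintro ⟨σ, hfit, hpeak⟩
    have hload i := hpeak (σ i) ((Nat.lt_add_of_pos_right (hw i)).trans_le (hfit i))
    obtain ⟨ρ, hcard, hdisj⟩ := exists_machine_assignment σ w h hw hload univ
    exact ⟨σ, ρ, hfit, fun j => hcard j (mem_univ j),
      fun j j' hne h₁ h₂ => hdisj (mem_univ j) (mem_univ j') hne ⟨h₁, h₂⟩⟩
  · rintro ⟨σ, ρ, hfit, hcard, hdisj⟩
    refine ⟨σ, hfit, fun k _ => ?_⟩
    calc ∑ i ∈ univ.filter (fun i => σ i ≤ k ∧ k < σ i + w i), h i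
        = ∑ i ∈ univ.filter (fun i => σ i ≤ k ∧ k < σ i + w i), #(ρ i) := by simp only [hcard]
      _ ≤ Fintype.card (Fin m) := sum_card_le_card_of_pairwiseDisjoint fun j hj j' hj' hne =>
          have hov := overlap_of_active (mem_filter.mp hj).2 (mem_filter.mp hj').2
          hdisj j j' hne hov.1 hov.2
      _ = m := Fintype.card_fin m

/-- **Equivalence of Demand Strip Packing and Parallel Task Scheduling.**
A DSP instance `(I, w, h, W)` admits a packing with peak height at most `m`
iff the PTS instance with jobs `I`, processing times `p = w`, machine
requirements `q = h`, and `m` machines admits a feasible schedule with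
makespan at most `W`. -/
theorem dsp_packing_iff_pts_schedule
    (I : Type*) [Fintype I] (w h : I → ℕ)
    (hw : ∀ i, 0 < w i) (hh : ∀ i, 0 < h i)
    (W m : ℕ) (hW : 0 < W) (hm : 0 < m) :
    (∃ lam : I → ℕ,
        (∀ i, lam i + w i ≤ W) ∧
        ∀ k, k < W →
          (∑ i ∈ Finset.univ.filter (fun i => lam i ≤ k ∧ k < lam i + w i), h i) ≤ m)
    ↔
    (∃ (σ : I → ℕ) (ρ : I → Finset (Fin m)),
        (∀ j, σ j + w j ≤ W) ∧
        (∀ j, (ρ j).card = h j) ∧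
        ∀ j j', j ≠ j' → σ j < σ j' + w j' → σ j' < σ j + w j →
          Disjoint (ρ j) (ρ j')) :=
  dsp_packing_iff_pts_schedule_general I w h hw W m
end

section
/- Let J be a finite set, σ : J → ℕ, and let p, q : J → ℕ take positive values; let m ∈ ℕ. If for every t ∈ ℕ the total requirement Σ_{j : σ(j) ≤ t < σ(j)+p(j)} q(j) is at most m, then there exists ρ : J → Finset (Fin m) such that |ρ(j)| = q(j) for all j and ρ(j) ∩ ρ(j') = ∅ whenever j ≠ j' and the time intervals [σ(j), σ(j)+p(j)) and [σ(j'), σ(j')+p(j')) intersect. -/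
/-!
Assign machines greedily in order of start time. When the job `j` that starts last is
added, every job already placed that overlaps `j` is still running at time `σ j`, as is `j`
itself, so by the capacity bound at `σ j` the machines those jobs hold leave at least
`q j` free machines for `j`.
-/

open Finset

section GreedyAssignment

variable {ι α : Type*} [Fintype α] [DecidableEq α]

theorem exists_card_eq_disjoint_of_sum_card_add_le_s1 (T : Finset ι) (ρ : ι → Finset α) {k : ℕ}
    (h : ∑ j ∈ T, (ρ j).card + k ≤ Fintype.card α) :
    ∃ B : Finset α, B.card = k ∧ ∀ j ∈ T, Disjoint B (ρ j) := by
  have hfree : k ≤ (T.biUnion ρ)ᶜ.card := by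
    have := card_biUnion_le (s := T) (t := ρ)
    rw [card_compl]
    omega
  obtain ⟨B, hB, hBcard⟩ := exists_subset_card_eq hfree
  exact ⟨B, hBcard, fun j hj => disjoint_compl_left.mono hB (subset_biUnion_of_mem ρ hj)⟩

/-- Weighted greedy colouring of the conflict graph `r`, visiting vertices in increasing `f`. -/
theorem exists_disjoint_assignment_of_greedy_bound [Fintype ι] [DecidableEq ι]
    {β : Type*} [LinearOrder β] (r : ι → ι → Prop) [DecidableRel r] (hr : Std.Symm r)
    (f : ι → β) (q : ι → ℕ)
    (h : ∀ j, q j + ∑ j' ∈ univ.filter (fun j' => j' ≠ j ∧ f j' ≤ f j ∧ r j j'), q j'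
      ≤ Fintype.card α) :
    ∃ ρ : ι → Finset α,
      (∀ j, (ρ j).card = q j) ∧ ∀ j j', j ≠ j' → r j j' → Disjoint (ρ j) (ρ j') := by
  suffices ∀ s : Finset ι, ∃ ρ : ι → Finset α, (∀ j ∈ s, (ρ j).card = q j) ∧
      ∀ j ∈ s, ∀ j' ∈ s, j ≠ j' → r j j' → Disjoint (ρ j) (ρ j') by
    obtain ⟨ρ, hcard, hdisj⟩ := this univ
    exact ⟨ρ, fun j => hcard j (mem_univ j), fun j j' => hdisj j (mem_univ j) j' (mem_univ j')⟩
  intro s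
  induction s using Finset.induction_on_max_value f with
  | empty => exact ⟨fun _ => ∅, by simp, by simp⟩
  | insert a s ha hmax ih =>
    obtain ⟨ρ, hcard, hdisj⟩ := ih
    have hN : s.filter (r a) ⊆ univ.filter (fun j' => j' ≠ a ∧ f j' ≤ f a ∧ r a j') := by
      intro j hj
      obtain ⟨hjs, hrj⟩ := mem_filter.1 hj
      exact mem_filter.2 ⟨mem_univ j, ne_of_mem_of_not_mem hjs ha, hmax j hjs, hrj⟩
    obtain ⟨B, hBcard, hBdisj⟩ :=
      exists_card_eq_disjoint_of_sum_card_add_le_s1 (s.filter (r a)) ρ (k := q a) <| calc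
        ∑ j ∈ s.filter (r a), (ρ j).card + q a = ∑ j ∈ s.filter (r a), q j + q a := by
          rw [sum_congr rfl fun j hj => hcard j (mem_filter.1 hj).1]
        _ ≤ Fintype.card α := by
          have := sum_le_sum_of_subset (f := q) hN
          linarith [h a]
    have hnew : ∀ j ∈ s, r a j → Disjoint (Function.update ρ a B a) (Function.update ρ a B j) :=
      fun j hj hrj => by
        rw [Function.update_self, Function.update_of_ne (ne_of_mem_of_not_mem hj ha)]
        exact hBdisj j (mem_filter.2 ⟨hj, hrj⟩)
    refine ⟨Function.update ρ a B, ?_, ?_⟩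
    · intro j hj
      rcases mem_insert.1 hj with rfl | hj
      · simpa using hBcard
      · rw [Function.update_of_ne (ne_of_mem_of_not_mem hj ha)]
        exact hcard j hj
    · intro j hj j' hj' hne hrj
      rcases mem_insert.1 hj with rfl | hjs <;> rcases mem_insert.1 hj' with rfl | hjs'
      · exact absurd rfl hne
      · exact hnew j' hjs' hrj
      · exact (hnew j hjs (hr.symm _ _ hrj)).symm
      · rw [Function.update_of_ne (ne_of_mem_of_not_mem hjs ha),
          Function.update_of_ne (ne_of_mem_of_not_mem hjs' ha)]
        exact hdisj j hjs j' hjs' hne hrj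

end GreedyAssignment

theorem machine_assignment_exists_general
    (J : Type*) [Fintype J] (σ p q : J → ℕ)
    (hp : ∀ j, 0 < p j) (m : ℕ)
    (hcap : ∀ t : ℕ,
      (∑ j ∈ Finset.univ.filter (fun j => σ j ≤ t ∧ t < σ j + p j), q j) ≤ m) :
    ∃ ρ : J → Finset (Fin m),
      (∀ j, (ρ j).card = q j) ∧
      ∀ j j', j ≠ j' → σ j < σ j' + p j' → σ j' < σ j + p j →
        Disjoint (ρ j) (ρ j') := by
  classical
  let overlap : J → J → Prop := fun j j' => σ j < σ j' + p j' ∧ σ j' < σ j + p j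
  have hbound : ∀ j, q j + ∑ j' ∈ univ.filter (fun j' => j' ≠ j ∧ σ j' ≤ σ j ∧ overlap j j'),
      q j' ≤ Fintype.card (Fin m) := by
    intro j
    have hj : j ∉ univ.filter (fun j' => j' ≠ j ∧ σ j' ≤ σ j ∧ overlap j j') := by simp
    have hactive : insert j (univ.filter (fun j' => j' ≠ j ∧ σ j' ≤ σ j ∧ overlap j j')) ⊆
        univ.filter (fun j' => σ j' ≤ σ j ∧ σ j < σ j' + p j') := by
      intro j' hj'
      rcases mem_insert.1 hj' with rfl | hj'
      · simpa using hp j'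
      · obtain ⟨-, hle, hov, -⟩ := (mem_filter.1 hj').2
        exact mem_filter.2 ⟨mem_univ j', hle, hov⟩
    have := sum_le_sum_of_subset (f := q) hactive
    rw [sum_insert hj] at this
    simpa using this.trans (hcap (σ j))
  obtain ⟨ρ, hcard, hdisj⟩ := exists_disjoint_assignment_of_greedy_bound overlap
    ⟨fun _ _ h => h.symm⟩ σ q hbound
  exact ⟨ρ, hcard, fun j j' hne h₁ h₂ => hdisj j j' hne ⟨h₁, h₂⟩⟩

/-- **Conflict-free machine assignment for capacity-feasible start times.**
If jobs `j` run during `[σ j, σ j + p j)`, require `q j` machines each, and at every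
time `t` the total requirement of running jobs is at most `m`, then there is an
assignment of machine sets `ρ j ⊆ Fin m` with `|ρ j| = q j` such that jobs whose
time intervals intersect receive disjoint machine sets. -/
theorem machine_assignment_exists
    (J : Type*) [Fintype J] (σ p q : J → ℕ)
    (hp : ∀ j, 0 < p j) (hq : ∀ j, 0 < q j) (m : ℕ)
    (hcap : ∀ t : ℕ,
      (∑ j ∈ Finset.univ.filter (fun j => σ j ≤ t ∧ t < σ j + p j), q j) ≤ m) :
    ∃ ρ : J → Finset (Fin m),
      (∀ j, (ρ j).card = q j) ∧
      ∀ j j', j ≠ j' → σ j < σ j' + p j' → σ j' < σ j + p j →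
        Disjoint (ρ j) (ρ j') :=
  machine_assignment_exists_general J σ p q hp m hcap
end

section
/- Let J be a finite set of jobs, each job j with start time s(j) ∈ ℕ and finish time e(j) ∈ ℕ satisfying s(j) < e(j), and with machine requirement q(j) ∈ {1, 2, 3}. Suppose that for every t ∈ ℕ we have Σ_{j : s(j) ≤ t < e(j)} q(j) ≤ 3. Then there exists an assignment ρ : J → Finset (Fin 3) such that |ρ(j)| = q(j) for every j, the middle machine (index 1) belongs to ρ(j) whenever q(j) ≥ 2, and ρ(j) ∩ ρ(j') = ∅ whenever j ≠ j' and the time intervals [s(j), e(j)) and [s(j'), e(j')) intersect. -/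
/-!
Jobs with `q j ≥ 2` all take machine 1 (two of them never overlap, their load would exceed 3),
so what remains is to choose a set of unit jobs for machine 1 that are pairwise disjoint, never
meet a wide job, and meet every time at which three unit jobs run; everything else then fits on
the side machines 0 and 2, and a proper 2-colouring of it places it there.

Colour the unit jobs properly with three colours (greedily, in order of start times) and call a
time crowded if at least two unit jobs run; a wide job never runs at a crowded time. Only unit
jobs crossing an end of a maximal crowded run can leave it, and at each end at most one does, so
some colour avoids both. The unit jobs of that colour meeting the run lie inside it, are pairwise
disjoint, and meet every time of the run at which three unit jobs (hence all three colours) run.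
-/

open Finset

def IsIntervalColoring {ι κ : Type*} (s e : ι → ℕ) (S : Finset ι) (c : ι → κ) : Prop :=
  ∀ i ∈ S, ∀ j ∈ S, i ≠ j → s i < e j → s j < e i → c i ≠ c j

theorem exists_interval_coloring {ι : Type*} (s e : ι → ℕ) (k : ℕ) [NeZero k]
    (S : Finset ι) (hse : ∀ i ∈ S, s i < e i)
    (hk : ∀ t, #{i ∈ S | s i ≤ t ∧ t < e i} ≤ k) :
    ∃ c : ι → Fin k, IsIntervalColoring s e S c := by
  classical
  induction S using Finset.induction_on_max_value s with
  | empty => exact ⟨0, by simp [IsIntervalColoring]⟩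
  | insert a S haS hmax ih =>
    obtain ⟨c, hc⟩ := ih (fun i hi => hse i (mem_insert_of_mem hi)) fun t =>
      (card_le_card (filter_subset_filter _ (subset_insert a S))).trans (hk t)
    set N := {i ∈ S | s a < e i}
    have hN : #N < k := by
      have hsub : insert a N ⊆ {i ∈ insert a S | s i ≤ s a ∧ s a < e i} := by
        intro i hi
        simp only [N, mem_insert, mem_filter] at hi ⊢
        rcases hi with rfl | ⟨hiS, hi⟩
        · exact ⟨.inl rfl, le_rfl, hse i (mem_insert_self i S)⟩
        · exact ⟨.inr hiS, hmax i hiS, hi⟩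
      have := (card_le_card hsub).trans (hk (s a))
      rwa [card_insert_of_notMem fun h => haS (mem_filter.1 h).1] at this
    obtain ⟨f, -, hf⟩ := exists_mem_notMem_of_card_lt_card
      (s := N.image c) (t := univ) (card_image_le.trans_lt (by simpa using hN))
    refine ⟨Function.update c a f, ?_⟩
    have hfresh : ∀ i ∈ S, s a < e i → f ≠ c i := fun i hi hai h =>
      hf (h ▸ mem_image_of_mem c (mem_filter.2 ⟨hi, hai⟩))
    intro i hi j hj hij hie hje
    have hne : ∀ x ∈ S, x ≠ a := fun x hx => ne_of_mem_of_not_mem hx haS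
    rcases mem_insert.1 hi with rfl | hiS <;> rcases mem_insert.1 hj with rfl | hjS
    · exact absurd rfl hij
    · simpa [Function.update_of_ne (hne j hjS)] using hfresh j hjS hie
    · simpa [Function.update_of_ne (hne i hiS)] using (hfresh i hiS hje).symm
    · simpa [Function.update_of_ne (hne i hiS), Function.update_of_ne (hne j hjS)]
        using hc i hiS j hjS hij hie hje

namespace Nat

variable (P : ℕ → Prop)

open Classical in
noncomputable def runStart (t : ℕ) : ℕ := Nat.findGreatest (fun a => a = 0 ∨ ¬P (a - 1)) t

noncomputable def runEnd (a : ℕ) : ℕ := sInf {u | a ≤ u ∧ ¬P u}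

variable {P}

theorem runStart_le (t : ℕ) : runStart P t ≤ t := by
  classical
  exact Nat.findGreatest_le t

theorem runStart_eq_zero_or (t : ℕ) : runStart P t = 0 ∨ ¬P (runStart P t - 1) := by
  classical
  exact Nat.findGreatest_spec (P := fun a => a = 0 ∨ ¬P (a - 1)) (zero_le t) (.inl rfl)

theorem runStart_eq {a t : ℕ} (ha : a = 0 ∨ ¬P (a - 1)) (hat : a ≤ t)
    (hP : ∀ v, a ≤ v → v < t → P v) : runStart P t = a := by
  classical
  refine Nat.findGreatest_eq_iff.2 ⟨hat, fun _ => ha, fun n han hnt => ?_⟩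
  rintro (rfl | hn)
  exacts [absurd han (Nat.not_lt_zero a), hn (hP _ (by omega) (by omega))]

theorem of_runStart_le {t v : ℕ} (hv : runStart P t ≤ v) (hvt : v < t) : P v := by
  classical
  by_contra h
  exact Nat.findGreatest_is_greatest (P := fun a => a = 0 ∨ ¬P (a - 1))
    (Nat.lt_succ_of_le hv) hvt (.inr h)

theorem le_runEnd {a : ℕ} (h : ∃ u, a ≤ u ∧ ¬P u) : a ≤ runEnd P a := (Nat.sInf_mem h).1

theorem not_runEnd {a : ℕ} (h : ∃ u, a ≤ u ∧ ¬P u) : ¬P (runEnd P a) := (Nat.sInf_mem h).2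

theorem of_le_of_lt_runEnd {a v : ℕ} (hav : a ≤ v) (hv : v < runEnd P a) : P v := by
  by_contra h
  exact Nat.notMem_of_lt_sInf hv ⟨hav, h⟩

theorem lt_runEnd_runStart {t : ℕ} (h : ∃ u, t ≤ u ∧ ¬P u) (ht : P t) :
    t < runEnd P (runStart P t) := by
  have h' : ∃ u, runStart P t ≤ u ∧ ¬P u :=
    let ⟨u, htu, hu⟩ := h; ⟨u, (runStart_le t).trans htu, hu⟩
  by_contra! hle
  rcases hle.lt_or_eq with hlt | heq
  · exact not_runEnd h' (of_runStart_le (le_runEnd h') hlt)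
  · exact not_runEnd h' (by rwa [heq])

end Nat

section Jobs

variable {J : Type*} [Fintype J] (s e q : J → ℕ)

def running (t : ℕ) : Finset J := {j | s j ≤ t ∧ t < e j}

def unitsAt (t : ℕ) : Finset J := {j | q j = 1 ∧ s j ≤ t ∧ t < e j}

def Crowded (t : ℕ) : Prop := 2 ≤ #(unitsAt s e q t)

def crossing (a : ℕ) : Finset J := {j | q j = 1 ∧ s j < a ∧ a < e j}

noncomputable def blockStart (t : ℕ) : ℕ := Nat.runStart (Crowded s e q) t

noncomputable def blockEnd (a : ℕ) : ℕ := Nat.runEnd (Crowded s e q) a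

noncomputable def blockColor (col : J → Fin 3) (a : ℕ) : Fin 3 :=
  Classical.epsilon fun c =>
    c ∉ (crossing s e q a).image col ∪ (crossing s e q (blockEnd s e q a)).image col

def IsMiddle (col : J → Fin 3) (j : J) : Prop :=
  q j = 1 ∧ ∀ u, s j ≤ u → u < e j →
    Crowded s e q u ∧ col j = blockColor s e q col (blockStart s e q u)

variable {s e q}

theorem exists_not_crowded (a : ℕ) : ∃ u, a ≤ u ∧ ¬Crowded s e q u := by
  refine ⟨a + ∑ j, e j, le_add_right le_rfl, ?_⟩
  have : unitsAt s e q (a + ∑ j, e j) = ∅ :=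
    filter_eq_empty_iff.2 fun j _ ⟨_, _, h⟩ =>
      (single_le_sum (fun i _ => Nat.zero_le (e i)) (mem_univ j)).not_gt (by omega)
  simp [Crowded, this]

theorem card_crossing_le_one_of_not_crowded {a : ℕ} (h : ¬Crowded s e q a) :
    #(crossing s e q a) ≤ 1 := by
  have : crossing s e q a ⊆ unitsAt s e q a := by
    intro j
    simp only [crossing, unitsAt, mem_filter, mem_univ, true_and]
    omega
  have := card_le_card this
  rw [Crowded] at h
  omega

theorem card_crossing_le_one_of_runStart {a : ℕ} (h : a = 0 ∨ ¬Crowded s e q (a - 1)) :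
    #(crossing s e q a) ≤ 1 := by
  rcases h with rfl | h
  · simp [crossing]
  · have : crossing s e q a ⊆ unitsAt s e q (a - 1) := by
      intro j
      simp only [crossing, unitsAt, mem_filter, mem_univ, true_and]
      omega
    have := card_le_card this
    rw [Crowded] at h
    omega

variable (s e q) in
theorem blockColor_notMem (col : J → Fin 3) (t : ℕ) :
    blockColor s e q col (blockStart s e q t) ∉
      (crossing s e q (blockStart s e q t)).image col ∪
        (crossing s e q (blockEnd s e q (blockStart s e q t))).image col := by
  set a := blockStart s e q t
  refine Classical.epsilon_spec
    ((exists_mem_notMem_of_card_lt_card (t := (univ : Finset (Fin 3))) ?_).imp fun _ h => h.2)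
  have h1 : #(crossing s e q a) ≤ 1 :=
    card_crossing_le_one_of_runStart (Nat.runStart_eq_zero_or t)
  have h2 : #(crossing s e q (blockEnd s e q a)) ≤ 1 :=
    card_crossing_le_one_of_not_crowded (Nat.not_runEnd (exists_not_crowded a))
  calc _ ≤ #((crossing s e q a).image col) + #((crossing s e q (blockEnd s e q a)).image col) :=
        card_union_le _ _
    _ ≤ #(crossing s e q a) + #(crossing s e q (blockEnd s e q a)) :=
        add_le_add card_image_le card_image_le
    _ < #(univ : Finset (Fin 3)) := by simp only [card_univ, Fintype.card_fin]; omega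

theorem mem_running_max_of_overlap {i j : J} (hi : s i < e i) (hj : s j < e j)
    (h₁ : s i < e j) (h₂ : s j < e i) :
    i ∈ running s e (max (s i) (s j)) ∧ j ∈ running s e (max (s i) (s j)) := by
  simp only [running, mem_filter, mem_univ, true_and]
  omega

theorem card_le_three_of_subset_running (hq : ∀ j, 1 ≤ q j)
    (hcap : ∀ t, ∑ j ∈ running s e t, q j ≤ 3) {T : Finset J} {t : ℕ}
    (hT : T ⊆ running s e t) : #T ≤ 3 :=
  calc #T = ∑ _ ∈ T, 1 := card_eq_sum_ones T
    _ ≤ ∑ j ∈ T, q j := sum_le_sum fun j _ => hq j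
    _ ≤ 3 := (sum_le_sum_of_subset hT).trans (hcap t)

theorem add_le_three_of_overlap (hse : ∀ j, s j < e j)
    (hcap : ∀ t, ∑ j ∈ running s e t, q j ≤ 3) {i j : J} (hij : i ≠ j)
    (h₁ : s i < e j) (h₂ : s j < e i) : q i + q j ≤ 3 := by
  classical
  obtain ⟨hi, hj⟩ := mem_running_max_of_overlap (hse i) (hse j) h₁ h₂
  rw [← sum_pair hij]
  exact (sum_le_sum_of_subset (insert_subset hi (singleton_subset_iff.2 hj))).trans (hcap _)

theorem not_crowded_of_two_le (hcap : ∀ t, ∑ j ∈ running s e t, q j ≤ 3) {w : J} {t : ℕ}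
    (hw : 2 ≤ q w) (hwt : w ∈ running s e t) : ¬Crowded s e q t := by
  classical
  intro hcr
  have hsub : unitsAt s e q t ⊆ running s e t := by
    intro j
    simp only [unitsAt, running, mem_filter, mem_univ, true_and]
    omega
  have hw' : w ∉ unitsAt s e q t := by
    simp only [unitsAt, mem_filter, mem_univ, true_and]
    omega
  have hunits : ∑ j ∈ unitsAt s e q t, q j = #(unitsAt s e q t) := by
    rw [card_eq_sum_ones]
    exact sum_congr rfl fun j hj => (mem_filter.1 hj).2.1
  have := (sum_le_sum_of_subset (insert_subset hwt hsub)).trans (hcap t)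
  rw [sum_insert hw', hunits] at this
  rw [Crowded] at hcr
  omega

section Middle

variable {col : J → Fin 3}

theorem isMiddle_of_blockColor {t : ℕ} (ht : Crowded s e q t) {j : J}
    (hj : j ∈ unitsAt s e q t) (hjcol : col j = blockColor s e q col (blockStart s e q t)) :
    IsMiddle s e q col j := by
  set a := blockStart s e q t
  set b := blockEnd s e q a
  simp only [unitsAt, mem_filter, mem_univ, true_and] at hj
  obtain ⟨hq1, hsj, hej⟩ := hj
  have hcolj := blockColor_notMem s e q col t
  rw [← hjcol] at hcolj
  have has : a ≤ s j := by
    by_contra! h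
    exact hcolj (mem_union_left _ (mem_image_of_mem col (by
      simp only [crossing, mem_filter, mem_univ, true_and]
      exact ⟨hq1, h, (Nat.runStart_le t).trans_lt hej⟩)))
  have heb : e j ≤ b := by
    by_contra! h
    have htb : t < b := Nat.lt_runEnd_runStart (exists_not_crowded t) ht
    exact hcolj (mem_union_right _ (mem_image_of_mem col (by
      simp only [crossing, mem_filter, mem_univ, true_and]
      exact ⟨hq1, hsj.trans_lt htb, h⟩)))
  refine ⟨hq1, fun u hju hue => ⟨?_, ?_⟩⟩
  · exact Nat.of_le_of_lt_runEnd (has.trans hju) (hue.trans_le heb)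
  · rw [hjcol]
    exact congrArg _ (Nat.runStart_eq (Nat.runStart_eq_zero_or t) (has.trans hju)
      fun v hav hvu => Nat.of_le_of_lt_runEnd hav ((hvu.trans hue).trans_le heb)).symm

theorem exists_isMiddle_of_three_le (hcol : IsIntervalColoring s e {j | q j = 1} col) {t : ℕ}
    (ht : 3 ≤ #(unitsAt s e q t)) : ∃ j ∈ running s e t, IsMiddle s e q col j := by
  have hinj : Set.InjOn col (unitsAt s e q t) := by
    intro i hi j hj hij
    by_contra hne
    simp only [unitsAt, coe_filter, mem_univ, true_and, Set.mem_ofPred_eq] at hi hj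
    exact hcol i (by simpa using hi.1) j (by simpa using hj.1) hne (by omega) (by omega) hij
  have himg : (unitsAt s e q t).image col = univ :=
    eq_of_subset_of_card_le (subset_univ _) (by
      rw [card_image_of_injOn hinj, card_univ, Fintype.card_fin]; exact ht)
  obtain ⟨j, hj, hjcol⟩ :=
    mem_image.1 (himg ▸ mem_univ (blockColor s e q col (blockStart s e q t)))
  refine ⟨j, ?_, isMiddle_of_blockColor (by rw [Crowded]; omega) hj hjcol⟩
  simp only [unitsAt, running, mem_filter] at hj ⊢
  exact ⟨hj.1, hj.2.2⟩

theorem false_of_overlap_of_middle (hse : ∀ j, s j < e j)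
    (hcap : ∀ t, ∑ j ∈ running s e t, q j ≤ 3)
    (hcol : IsIntervalColoring s e {j | q j = 1} col)
    {i j : J} (hij : i ≠ j) (h₁ : s i < e j) (h₂ : s j < e i)
    (hi : IsMiddle s e q col i ∨ 2 ≤ q i) (hj : IsMiddle s e q col j ∨ 2 ≤ q j) :
    False := by
  obtain ⟨hiu, hju⟩ := mem_running_max_of_overlap (hse i) (hse j) h₁ h₂
  have hmid : ∀ {k}, IsMiddle s e q col k → k ∈ running s e (max (s i) (s j)) →
      Crowded s e q (max (s i) (s j)) ∧
        col k = blockColor s e q col (blockStart s e q (max (s i) (s j))) := fun hk hku => by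
    simp only [running, mem_filter, mem_univ, true_and] at hku
    exact hk.2 _ hku.1 hku.2
  rcases hi with hi | hi <;> rcases hj with hj | hj
  · exact hcol i (by simpa using hi.1) j (by simpa using hj.1) hij h₁ h₂
      ((hmid hi hiu).2.trans (hmid hj hju).2.symm)
  · exact not_crowded_of_two_le hcap hj hju (hmid hi hiu).1
  · exact not_crowded_of_two_le hcap hi hiu (hmid hj hju).1
  · have := add_le_three_of_overlap hse hcap hij h₁ h₂
    omega

theorem card_filter_not_isMiddle_le_two (hq : ∀ j, 1 ≤ q j)
    (hcap : ∀ t, ∑ j ∈ running s e t, q j ≤ 3)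
    (hcol : IsIntervalColoring s e {j | q j = 1} col)
    [DecidablePred (IsMiddle s e q col)] (t : ℕ) :
    #{i ∈ {j | ¬IsMiddle s e q col j} | s i ≤ t ∧ t < e i} ≤ 2 := by
  classical
  set T : Finset J := {i ∈ {j | ¬IsMiddle s e q col j} | s i ≤ t ∧ t < e i}
  have hT : T ⊆ running s e t := filter_subset_filter _ (subset_univ _)
  by_contra! h3
  have hunit : ∀ j ∈ T, q j = 1 := by
    by_contra! hw
    have := calc #T = ∑ _ ∈ T, 1 := card_eq_sum_ones T
      _ < ∑ j ∈ T, q j := sum_lt_sum (fun j _ => hq j)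
          (hw.imp fun j hj => ⟨hj.1, lt_of_le_of_ne (hq j) (Ne.symm hj.2)⟩)
      _ ≤ 3 := (sum_le_sum_of_subset hT).trans (hcap t)
    omega
  have hTunits : T ⊆ unitsAt s e q t := by
    intro j hj
    have := hunit j hj
    simp only [T, unitsAt, mem_filter, mem_univ, true_and] at hj ⊢
    exact ⟨this, hj.2⟩
  obtain ⟨m, hm, hmid⟩ := exists_isMiddle_of_three_le hcol (h3.trans_le (card_le_card hTunits))
  have hmT : m ∉ T := fun h => (mem_filter.1 (mem_filter.1 h).1).2 hmid
  have := card_le_three_of_subset_running hq hcap (insert_subset hm hT)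
  rw [card_insert_of_notMem hmT] at this
  omega

end Middle

end Jobs

section Machines

variable {J : Type*} (q : J → ℕ) (mid : J → Prop) [DecidablePred mid] (c : J → Fin 2)

def machines (j : J) : Finset (Fin 3) :=
  (if mid j ∨ 2 ≤ q j then {1} else ∅) ∪
    (if q j = 3 then {0, 2} else if mid j then ∅ else {![0, 2] (c j)})

variable {q mid c}

theorem card_machines {j : J} (hq : q j ∈ ({1, 2, 3} : Set ℕ)) (hmid : mid j → q j = 1) :
    #(machines q mid c j) = q j := by
  have hside : ∀ k : Fin 2, ![0, 2] k ≠ (1 : Fin 3) := by decide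
  simp only [Set.mem_insert_iff, Set.mem_singleton_iff] at hq
  by_cases hm : mid j
  · simp [machines, hm, hmid hm]
  · rcases hq with h | h | h <;> simp [machines, hm, h, card_pair (hside (c j)).symm]

theorem one_mem_machines {j : J} (hq : 2 ≤ q j) : 1 ∈ machines q mid c j := by
  simp [machines, hq]

theorem disjoint_machines {i j : J} (hmid : ¬((mid i ∨ 2 ≤ q i) ∧ (mid j ∨ 2 ≤ q j)))
    (hi : q i ≠ 3) (hj : q j ≠ 3) (hc : ¬mid i → ¬mid j → c i ≠ c j) :
    Disjoint (machines q mid c i) (machines q mid c j) := by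
  have hside : ∀ k : Fin 2, (1 : Fin 3) ≠ ![0, 2] k := by decide
  have hinj : ∀ k l : Fin 2, (![0, 2] k : Fin 3) = ![0, 2] l ↔ k = l := by decide
  unfold machines
  split_ifs <;> simp [hside, hinj] <;> first | omega | tauto

end Machines

/-- **Three-machine assignment with the middle machine for wide jobs.**
Jobs run during `[s j, e j)`, require `q j ∈ {1,2,3}` machines, and at every time the
total requirement of running jobs is at most `3`.  Then machines `{0,1,2}` can be
assigned so that every job gets exactly `q j` machines, every job with `q j ≥ 2`
uses the middle machine `1`, and overlapping jobs get disjoint machine sets. -/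
theorem three_machine_assignment
    (J : Type*) [Fintype J] (s e q : J → ℕ)
    (hse : ∀ j, s j < e j) (hq : ∀ j, q j ∈ ({1, 2, 3} : Set ℕ))
    (hcap : ∀ t : ℕ,
      (∑ j ∈ Finset.univ.filter (fun j => s j ≤ t ∧ t < e j), q j) ≤ 3) :
    ∃ ρ : J → Finset (Fin 3),
      (∀ j, (ρ j).card = q j) ∧
      (∀ j, 2 ≤ q j → (1 : Fin 3) ∈ ρ j) ∧
      ∀ j j', j ≠ j' → s j < e j' → s j' < e j →
        Disjoint (ρ j) (ρ j') := by
  classical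
  have hq1 : ∀ j, 1 ≤ q j := fun j => by rcases hq j with h | h | h <;> simp_all
  obtain ⟨col, hcol⟩ := exists_interval_coloring s e 3 {j | q j = 1} (fun j _ => hse j)
    fun t => card_le_three_of_subset_running hq1 hcap (filter_subset_filter _ (subset_univ _))
  obtain ⟨c, hc⟩ := exists_interval_coloring s e 2 {j | ¬IsMiddle s e q col j}
    (fun j _ => hse j) (card_filter_not_isMiddle_le_two hq1 hcap hcol)
  refine ⟨machines q (IsMiddle s e q col) c, fun j => card_machines (hq j) And.left,
    fun j => one_mem_machines, fun i j hij h₁ h₂ => ?_⟩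
  have hsum := add_le_three_of_overlap hse hcap hij h₁ h₂
  exact disjoint_machines (fun h => false_of_overlap_of_middle hse hcap hcol hij h₁ h₂ h.1 h.2)
    (by have := hq1 j; omega) (by have := hq1 i; omega)
    fun hi hj => hc i (by simpa using hi) j (by simpa using hj) hij h₁ h₂
end

section
/- Let 0 < ε ≤ 1/4 and W, OPT > 0. Any finite set M of items, each of width at most W and height at most ε·OPT, whose total area is at most ε¹³·W·OPT, can be placed integrally, axis-aligned and without overlap, into a single box of width W and height at most 2ε·OPT. -/
/-!
Sort the items by non-increasing height and pack them Next-Fit into shelves: the first shelf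
has height `ε·OPT`, every later one the height of its first item. When a shelf is closed, its
items together with the item that opens the next shelf are wider than `W`, and all of them are
at least as tall as the next shelf. Charging the next shelf's height to these items counts
every item at most twice, so the packing has height at most
`ε·OPT + 2·area/W ≤ ε·OPT + 2ε¹³·OPT ≤ 2ε·OPT`.
-/

lemma List.Pairwise.of_cons_cons {α : Type*} {R : α → α → Prop} {a b : α} {t : List α}
    (hs : (a :: b :: t).Pairwise R) : R a b ∧ (a :: t).Pairwise R ∧ (b :: t).Pairwise R :=
  ⟨List.rel_of_pairwise_cons hs List.mem_cons_self,
    hs.sublist (List.Sublist.cons_cons a (List.sublist_cons_self b t)), hs.of_cons⟩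

lemma List.exists_perm_pairwise_map_ge {α β : Type*} [LinearOrder β] (f : α → β) (l₀ : List α) :
    ∃ l : List α, l.Perm l₀ ∧ (l.map f).Pairwise (· ≥ ·) := by
  refine ⟨l₀.mergeSort (fun a b => decide (f b ≤ f a)), List.mergeSort_perm _ _, ?_⟩
  refine List.pairwise_map.2 ((List.pairwise_mergeSort ?_ ?_ l₀).imp (by simp))
  · simp only [decide_eq_true_eq]
    exact fun a b c hab hbc => hbc.trans hab
  · simpa using fun a b => le_total (f b) (f a)

section NextFit

variable {I : Type*} (w h : I → ℝ) (W : ℝ)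

/-- The state is the cursor `cx` on the current shelf, whose bottom is `cy` and height `sh`. -/
noncomputable def nextFit : List I → ℝ → ℝ → ℝ → List (I × ℝ × ℝ)
  | [], _, _, _ => []
  | i :: l, cx, cy, sh =>
    if cx + w i ≤ W then (i, cx, cy) :: nextFit l (cx + w i) cy sh
    else (i, 0, cy + sh) :: nextFit l (w i) (cy + sh) (h i)

noncomputable def nextFitHeight : List I → ℝ → ℝ → ℝ → ℝ
  | [], _, cy, sh => cy + sh
  | i :: l, cx, cy, sh =>
    if cx + w i ≤ W then nextFitHeight l (cx + w i) cy sh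
    else nextFitHeight l (w i) (cy + sh) (h i)

def DisjointPlacements (p q : I × ℝ × ℝ) : Prop :=
  p.2.1 + w p.1 ≤ q.2.1 ∨ q.2.1 + w q.1 ≤ p.2.1 ∨ p.2.2 + h p.1 ≤ q.2.2 ∨ q.2.2 + h q.1 ≤ p.2.2

instance : Std.Symm (DisjointPlacements w h) :=
  ⟨fun _ _ hpq => by unfold DisjointPlacements at *; tauto⟩

lemma map_fst_nextFit (l : List I) (cx cy sh : ℝ) :
    (nextFit w h W l cx cy sh).map Prod.fst = l := by
  induction l generalizing cx cy sh with
  | nil => rfl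
  | cons i l ih => unfold nextFit; split_ifs <;> simp [ih]

lemma le_nextFitHeight (hh : ∀ i, 0 ≤ h i) (l : List I) (cx cy sh : ℝ) :
    cy + sh ≤ nextFitHeight w h W l cx cy sh := by
  induction l generalizing cx cy sh with
  | nil => exact le_rfl
  | cons i l ih =>
    unfold nextFitHeight
    split_ifs
    · exact ih _ _ _
    · linarith [ih (w i) (cy + sh) (h i), hh i]

lemma nextFit_staircase (hw : ∀ i, 0 ≤ w i) (hh : ∀ i, 0 ≤ h i) (l : List I) (cx cy sh : ℝ) :
    ∀ p ∈ nextFit w h W l cx cy sh, (p.2.2 = cy ∧ cx ≤ p.2.1) ∨ cy + sh ≤ p.2.2 := by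
  induction l generalizing cx cy sh with
  | nil => simp [nextFit]
  | cons i l ih =>
    unfold nextFit
    split_ifs
    · refine List.forall_mem_cons.2 ⟨Or.inl ⟨rfl, le_rfl⟩, fun p hp => ?_⟩
      rcases ih _ _ _ p hp with ⟨hy, hx⟩ | hy
      · exact Or.inl ⟨hy, by linarith [hw i]⟩
      · exact Or.inr hy
    · refine List.forall_mem_cons.2 ⟨Or.inr le_rfl, fun p hp => Or.inr ?_⟩
      rcases ih _ _ _ p hp with ⟨hy, -⟩ | hy
      · exact hy.ge
      · linarith [hh i]

lemma pairwise_disjointPlacements_nextFit (hw : ∀ i, 0 ≤ w i) (hh : ∀ i, 0 ≤ h i)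
    (l : List I) (cx cy sh : ℝ) (hs : (sh :: l.map h).Pairwise (· ≥ ·)) :
    (nextFit w h W l cx cy sh).Pairwise (DisjointPlacements w h) := by
  induction l generalizing cx cy sh with
  | nil => simp [nextFit]
  | cons i l ih =>
    obtain ⟨hi, hs_same, hs_new⟩ := List.Pairwise.of_cons_cons hs
    unfold nextFit
    split_ifs
    · refine List.pairwise_cons.2 ⟨fun p hp => ?_, ih _ _ _ hs_same⟩
      rcases nextFit_staircase w h W hw hh l _ _ _ p hp with ⟨-, hx⟩ | hy
      · exact Or.inl hx
      · exact Or.inr (Or.inr (Or.inl (by dsimp only; linarith)))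
    · refine List.pairwise_cons.2 ⟨fun p hp => ?_, ih _ _ _ hs_new⟩
      rcases nextFit_staircase w h W hw hh l _ _ _ p hp with ⟨-, hx⟩ | hy
      · exact Or.inl (by simpa using hx)
      · exact Or.inr (Or.inr (Or.inl hy))

lemma nextFit_mem_box (hw : ∀ i, 0 ≤ w i) (hwW : ∀ i, w i ≤ W) (hh : ∀ i, 0 ≤ h i)
    (l : List I) (cx cy sh : ℝ) (hcx : 0 ≤ cx) (hs : (sh :: l.map h).Pairwise (· ≥ ·)) :
    ∀ p ∈ nextFit w h W l cx cy sh, 0 ≤ p.2.1 ∧ p.2.1 + w p.1 ≤ W ∧ cy ≤ p.2.2 ∧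
      p.2.2 + h p.1 ≤ nextFitHeight w h W l cx cy sh := by
  induction l generalizing cx cy sh with
  | nil => simp [nextFit]
  | cons i l ih =>
    obtain ⟨hi, hs_same, hs_new⟩ := List.Pairwise.of_cons_cons hs
    unfold nextFit nextFitHeight
    split_ifs with hfit
    · refine List.forall_mem_cons.2 ⟨⟨hcx, hfit, le_rfl, ?_⟩, ih _ _ _ (by linarith [hw i]) hs_same⟩
      linarith [le_nextFitHeight w h W hh l (cx + w i) cy sh]
    · refine List.forall_mem_cons.2
        ⟨⟨le_rfl, by simpa using hwW i, by linarith [hh i], le_nextFitHeight w h W hh l _ _ _⟩,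
          fun p hp => ?_⟩
      obtain ⟨hx, hxW, hy, hyH⟩ := ih (w i) (cy + sh) (h i) (hw i) hs_new p hp
      exact ⟨hx, hxW, by linarith [hh i], hyH⟩

/-- The cursor term `cx * m` pays for the shelf that the next item may have to open. -/
lemma nextFitHeight_mul_le (hw : ∀ i, 0 ≤ w i) (hh : ∀ i, 0 ≤ h i) (l : List I)
    (cx cy sh m : ℝ) (hcx : 0 ≤ cx) (hm : 0 ≤ m) (hs : (m :: l.map h).Pairwise (· ≥ ·)) :
    W * nextFitHeight w h W l cx cy sh ≤
      W * (cy + sh) + 2 * (l.map fun i => w i * h i).sum + cx * m := by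
  induction l generalizing cx cy sh m with
  | nil =>
    simp only [nextFitHeight, List.map_nil, List.sum_nil]
    linarith [mul_nonneg hcx hm]
  | cons i l ih =>
    have hi : h i ≤ m := List.rel_of_pairwise_cons hs List.mem_cons_self
    have hcx_mul : cx * h i ≤ cx * m := mul_le_mul_of_nonneg_left hi hcx
    rw [nextFitHeight, List.map_cons, List.sum_cons]
    split_ifs with hfit
    · have := ih (cx + w i) cy sh (h i) (by linarith [hw i]) (hh i) hs.of_cons
      linarith [mul_nonneg (hw i) (hh i)]
    · have := ih (w i) (cy + sh) (h i) (h i) (hw i) (hh i) hs.of_cons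
      linarith [mul_le_mul_of_nonneg_right (not_le.1 hfit).le (hh i)]

lemma exists_coords_of_pairwise_disjointPlacements (P : I × ℝ × ℝ → Prop)
    (out : List (I × ℝ × ℝ)) (hcover : ∀ i, i ∈ out.map Prod.fst) (hP : ∀ p ∈ out, P p)
    (hdisj : out.Pairwise (DisjointPlacements w h)) :
    ∃ x y : I → ℝ, (∀ i, P (i, x i, y i)) ∧
      ∀ i j, i ≠ j → DisjointPlacements w h (i, x i, y i) (j, x j, y j) := by
  choose p hp hpi using fun i => List.mem_map.1 (hcover i)
  have hp_eq : ∀ i, (i, (p i).2.1, (p i).2.2) = p i := fun i => Prod.ext (hpi i).symm rfl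
  refine ⟨fun i => (p i).2.1, fun i => (p i).2.2, fun i => ?_, fun i j hij => ?_⟩
  · rw [hp_eq]
    exact hP _ (hp i)
  · rw [hp_eq, hp_eq]
    exact hdisj.forall (hp i) (hp j) fun e => hij (by rw [← hpi i, ← hpi j, e])

end NextFit

lemma two_mul_pow_thirteen_le {ε : ℝ} (hε0 : 0 ≤ ε) (hε : ε ≤ 1 / 4) : 2 * ε ^ 13 ≤ ε := by
  have : ε ^ 12 ≤ (1 / 4) ^ 12 := pow_le_pow_left₀ hε0 hε 12
  calc 2 * ε ^ 13 = 2 * ε ^ 12 * ε := by ring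
    _ ≤ 1 * ε := by gcongr; linarith [show (2 : ℝ) * (1 / 4) ^ 12 ≤ 1 by norm_num]
    _ = ε := one_mul ε

/-- **Placing the medium items.**
Any finite set of items of width at most `W`, height at most `ε·OPT`, and total area at
most `ε¹³·W·OPT` can be placed integrally (as pairwise disjoint axis-aligned rectangles)
into a single box of width `W` and height at most `2ε·OPT`. -/
theorem place_medium_items
    (W OPT ε : ℝ) (hW : 0 < W) (hOPT : 0 < OPT) (hε0 : 0 < ε) (hε : ε ≤ 1 / 4)
    (I : Type*) [Fintype I] (w h : I → ℝ)
    (hw : ∀ i, 0 < w i ∧ w i ≤ W) (hh : ∀ i, 0 < h i ∧ h i ≤ ε * OPT)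
    (harea : (∑ i, w i * h i) ≤ ε ^ 13 * W * OPT) :
    ∃ (Hb : ℝ) (x y : I → ℝ),
      Hb ≤ 2 * ε * OPT ∧
      (∀ i, 0 ≤ x i ∧ x i + w i ≤ W ∧ 0 ≤ y i ∧ y i + h i ≤ Hb) ∧
      (∀ i j, i ≠ j →
        x i + w i ≤ x j ∨ x j + w j ≤ x i ∨ y i + h i ≤ y j ∨ y j + h j ≤ y i) := by
  have hw0 i : 0 ≤ w i := (hw i).1.le
  have hh0 i : 0 ≤ h i := (hh i).1.le
  obtain ⟨l, hperm, hsorted⟩ := List.exists_perm_pairwise_map_ge h Finset.univ.toList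
  have hchain : (ε * OPT :: l.map h).Pairwise (· ≥ ·) :=
    List.pairwise_cons.2 ⟨by simpa using fun i _ => (hh i).2, hsorted⟩
  have hsum : (l.map fun i => w i * h i).sum = ∑ i, w i * h i := by
    rw [(hperm.map _).sum_eq, Finset.sum_map_toList]
  have hheight : W * nextFitHeight w h W l 0 0 (ε * OPT) ≤ W * (2 * ε * OPT) := by
    have hbound := nextFitHeight_mul_le w h W hw0 hh0 l 0 0 (ε * OPT) (ε * OPT) le_rfl
      (by positivity) hchain
    have hε13 := mul_le_mul_of_nonneg_right (two_mul_pow_thirteen_le hε0.le hε)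
      (mul_pos hW hOPT).le
    linarith
  obtain ⟨x, y, hbox, hdisj⟩ := exists_coords_of_pairwise_disjointPlacements w h _
    (nextFit w h W l 0 0 (ε * OPT))
    (fun i => by simp [map_fst_nextFit, hperm.mem_iff])
    (nextFit_mem_box w h W hw0 (fun i => (hw i).2) hh0 l 0 0 (ε * OPT) le_rfl hchain)
    (pairwise_disjointPlacements_nextFit w h W hw0 hh0 l 0 0 (ε * OPT) hchain)
  exact ⟨_, x, y, le_of_mul_le_mul_left hheight hW, hbox, hdisj⟩
end

section
/- Let W, OPT > 0 be reals, let f be a real with 0 < f < 1 and 1/f ∈ ℕ, and define the sequence σ_0 = f and σ_{i+1} = σ_i²·f. Let I be a finite set of items with widths w(i) ∈ (0, W] and heights h(i) ∈ (0, OPT], and suppose the total area Σ_{i∈I} w(i)·h(i) is at most W·OPT. Then there exists an index i ∈ {0, 1, …, 2/f − 1} such that the total area of the items j with w(j) ∈ (σ_{i+1}·W, σ_i·W] or h(j) ∈ (σ_{i+1}·OPT, σ_i·OPT] is at most f·W·OPT. -/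
/-!
Since `σ` is antitone, the width intervals `(σ (i+1) * W, σ i * W]` are pairwise disjoint, and so
are the height intervals; hence every item is medium for at most two indices, once through its
width and once through its height. The medium areas of the `2n` indices therefore sum to at most
`2 * W * OPT = 2n * (f * W * OPT)`, and pigeonhole yields an index whose medium area is at most
`f * W * OPT`.
-/

open scoped Classical

open Finset

section Sums

variable {ι α M : Type*} [AddCommMonoid M] [PartialOrder M] [IsOrderedAddMonoid M]

theorem Finset.sum_sum_le_of_pairwiseDisjoint [DecidableEq α] {s : Finset ι} {t : Finset α}
    {u : ι → Finset α} {a : α → M} (hu : ∀ i ∈ s, u i ⊆ t)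
    (hd : (s : Set ι).PairwiseDisjoint u) (ha : ∀ j ∈ t, 0 ≤ a j) :
    ∑ i ∈ s, ∑ j ∈ u i, a j ≤ ∑ j ∈ t, a j := by
  rw [← sum_biUnion hd]
  exact sum_le_sum_of_subset_of_nonneg (biUnion_subset.2 hu) fun j hj _ => ha j hj

theorem Finset.sum_filter_or_le [DecidableEq α] {t : Finset α} {a : α → M}
    (ha : ∀ j ∈ t, 0 ≤ a j) (p q : α → Prop) [DecidablePred p] [DecidablePred q] :
    ∑ j ∈ t with p j ∨ q j, a j ≤
      ∑ j ∈ t with p j, a j + ∑ j ∈ t with q j, a j := by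
  rw [filter_or, ← sum_union_inter]
  exact le_add_of_nonneg_right <|
    sum_nonneg fun j hj => ha j (mem_of_mem_filter j (mem_of_mem_inter_left hj))

theorem Finset.sum_sum_filter_or_le [DecidableEq α] {s : Finset ι} {t : Finset α} {a : α → M}
    (ha : ∀ j ∈ t, 0 ≤ a j) (p q : ι → α → Prop)
    [∀ i, DecidablePred (p i)] [∀ i, DecidablePred (q i)]
    (hp : (s : Set ι).PairwiseDisjoint fun i => {j ∈ t | p i j})
    (hq : (s : Set ι).PairwiseDisjoint fun i => {j ∈ t | q i j}) :
    ∑ i ∈ s, ∑ j ∈ t with p i j ∨ q i j, a j ≤ 2 • ∑ j ∈ t, a j :=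
  calc ∑ i ∈ s, ∑ j ∈ t with p i j ∨ q i j, a j
      ≤ ∑ i ∈ s, ∑ j ∈ t with p i j, a j + ∑ i ∈ s, ∑ j ∈ t with q i j, a j := by
        rw [← sum_add_distrib]
        exact sum_le_sum fun i _ => sum_filter_or_le ha _ _
    _ ≤ 2 • ∑ j ∈ t, a j := by
        rw [two_nsmul]
        exact add_le_add (sum_sum_le_of_pairwiseDisjoint (fun _ _ => filter_subset _ _) hp ha)
          (sum_sum_le_of_pairwiseDisjoint (fun _ _ => filter_subset _ _) hq ha)

end Sums

theorem Antitone.pairwiseDisjoint_filter_Ioc_succ {α : Type*} {x : ℕ → ℝ} (hx : Antitone x)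
    (t : Finset α) (v : α → ℝ) (s : Set ℕ) :
    s.PairwiseDisjoint fun i => {j ∈ t | x (i + 1) < v j ∧ v j ≤ x i} := by
  intro i _ k _ hik
  refine disjoint_filter.2 fun j _ hi hk => ?_
  exact Set.disjoint_left.1 (hx.pairwise_disjoint_on_Ioc_succ hik) hi hk

theorem mem_Icc_of_succ_eq_sq_mul {f : ℝ} (hf : f ∈ Set.Icc 0 1) {σ : ℕ → ℝ}
    (h0 : σ 0 ∈ Set.Icc 0 1)
    (hs : ∀ i, σ (i + 1) = σ i ^ 2 * f) (i : ℕ) : σ i ∈ Set.Icc 0 1 := by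
  induction i with
  | zero => exact h0
  | succ i ih =>
    rw [hs]
    exact ⟨by have := hf.1; positivity, mul_le_one₀ (pow_le_one₀ ih.1 ih.2) hf.1 hf.2⟩

theorem antitone_of_succ_eq_sq_mul {f : ℝ} (hf : f ∈ Set.Icc 0 1) {σ : ℕ → ℝ}
    (h0 : σ 0 ∈ Set.Icc 0 1)
    (hs : ∀ i, σ (i + 1) = σ i ^ 2 * f) : Antitone σ := by
  refine antitone_nat_of_succ_le fun i => ?_
  obtain ⟨hσ0, hσ1⟩ := mem_Icc_of_succ_eq_sq_mul hf h0 hs i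
  rw [hs, sq, mul_assoc]
  exact mul_le_of_le_one_right hσ0 (mul_le_one₀ hσ1 hf.1 hf.2)

/-- **Choosing the parameters `δ` and `μ` (pigeonhole on the gap sequence).**
With `σ 0 = f` and `σ (i+1) = σ i ² · f`, for some index `i < 2/f` the items whose
width lies in `(σ (i+1)·W, σ i·W]` or whose height lies in `(σ (i+1)·OPT, σ i·OPT]`
have total area at most `f·W·OPT`. -/
theorem exists_index_medium_area_small
    (W OPT f : ℝ) (hW : 0 < W) (hOPT : 0 < OPT)
    (hf0 : 0 < f) (hf1 : f < 1) (n : ℕ) (hn : (n : ℝ) = 1 / f)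
    (σ : ℕ → ℝ) (hσ0 : σ 0 = f) (hσs : ∀ i, σ (i + 1) = (σ i) ^ 2 * f)
    (I : Type*) [Fintype I] (w h : I → ℝ)
    (hw : ∀ i, 0 < w i ∧ w i ≤ W) (hh : ∀ i, 0 < h i ∧ h i ≤ OPT)
    (harea : (∑ i, w i * h i) ≤ W * OPT) :
    ∃ i : ℕ, i < 2 * n ∧
      (∑ j ∈ Finset.univ.filter (fun j =>
          (σ (i + 1) * W < w j ∧ w j ≤ σ i * W) ∨
          (σ (i + 1) * OPT < h j ∧ h j ≤ σ i * OPT)), w j * h j)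
        ≤ f * W * OPT := by
  have hnf : (n : ℝ) * f = 1 := by rw [hn, one_div_mul_cancel hf0.ne']
  have hn0 : n ≠ 0 := by rintro rfl; simp at hnf
  have hf : f ∈ Set.Icc 0 1 := ⟨hf0.le, hf1.le⟩
  have hσ : Antitone σ := antitone_of_succ_eq_sq_mul hf (hσ0 ▸ hf) hσs
  have hmedium := sum_sum_filter_or_le (s := range (2 * n)) (t := univ)
    (fun j _ => (mul_pos (hw j).1 (hh j).1).le)
    (fun i j => σ (i + 1) * W < w j ∧ w j ≤ σ i * W)
    (fun i j => σ (i + 1) * OPT < h j ∧ h j ≤ σ i * OPT)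
    ((hσ.mul_const hW.le).pairwiseDisjoint_filter_Ioc_succ univ w _)
    ((hσ.mul_const hOPT.le).pairwiseDisjoint_filter_Ioc_succ univ h _)
  have hbudget : 2 • ∑ j, w j * h j ≤ ∑ _i ∈ range (2 * n), f * W * OPT := by
    rw [sum_const, card_range, nsmul_eq_mul, nsmul_eq_mul, Nat.cast_mul, Nat.cast_two,
      show 2 * (n : ℝ) * (f * W * OPT) = 2 * (W * OPT) by linear_combination 2 * W * OPT * hnf]
    gcongr
  obtain ⟨i, hi, hle⟩ :=
    exists_le_of_sum_le (nonempty_range_iff.2 (by omega)) (hmedium.trans hbudget)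
  exact ⟨i, mem_range.1 hi, hle⟩
end

section
/- Consider a box of width W > 0 and height h > 0, finitely many bottom items (w_1, a_1), …, (w_n, a_n) and finitely many top items (v_1, b_1), …, (v_m, b_m), all with positive widths and with heights a_i ≤ h and b_j ≤ h. Suppose there exists a feasible placement of all these items in the box. Then the following placement is also feasible: the bottom items are placed consecutively left-to-right starting at 0 in order of non-increasing height, and the top items are placed consecutively ending at W (right-justified) in order of non-decreasing height from left to right. -/
/-- A feasible placement of `n` bottom items `(w i, a i)` (occupying
`[x i, x i + w i) × [0, a i)`) and `m` top items `(v j, b j)` (occupying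
`[y j, y j + v j) × [h - b j, h)`) in the box `[0, W) × [0, h]`:
all items lie in the box and the occupied regions are pairwise disjoint. -/
def FeasiblePlacement (W h : ℝ) {n m : ℕ} (w a : Fin n → ℝ) (v b : Fin m → ℝ)
    (x : Fin n → ℝ) (y : Fin m → ℝ) : Prop :=
  (∀ i, 0 ≤ x i ∧ x i + w i ≤ W) ∧
  (∀ j, 0 ≤ y j ∧ y j + v j ≤ W) ∧
  (∀ i i', i ≠ i' → x i + w i ≤ x i' ∨ x i' + w i' ≤ x i) ∧
  (∀ j j', j ≠ j' → y j + v j ≤ y j' ∨ y j' + v j' ≤ y j) ∧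
  (∀ i j, x i < y j + v j → y j < x i + w i → a i + b j ≤ h)

/-!
After reindexing, the items are sorted: bottom item `k` is packed at `∑_{l < k} w l` and top
item `k` is right-justified at `W - ∑_{l ≥ k} v l`. The packed items fit and do not overlap
because disjoint intervals in `[0, W)` have total length at most `W` (Lebesgue measure).
If the packed bottom item `i` and top item `j` overlap horizontally, then the bottom items
`k ≤ i` together with the top items `l ≥ j` are wider than `W`, so in the given placement one
of these bottom items overlaps one of these top items; their heights sum to at most `h`, and by
the sorting they are at least as tall as `i` and `j`.
-/

open Finset MeasureTheory

section Packing

variable {ι : Type*} [PartialOrder ι] {w v : ι → ℝ}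

def leftPacked [LocallyFiniteOrderBot ι] (w : ι → ℝ) (k : ι) : ℝ := ∑ l ∈ Iio k, w l

def rightPacked [LocallyFiniteOrderTop ι] (W : ℝ) (v : ι → ℝ) (k : ι) : ℝ := W - ∑ l ∈ Ici k, v l

section LocallyFiniteOrderBot

variable [LocallyFiniteOrderBot ι]

lemma leftPacked_nonneg (hw : ∀ k, 0 ≤ w k) (k : ι) : 0 ≤ leftPacked w k :=
  sum_nonneg fun l _ => hw l

lemma leftPacked_add_le (hw : ∀ k, 0 ≤ w k) {k k' : ι} (hk : k < k') :
    leftPacked w k + w k ≤ leftPacked w k' := by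
  rw [leftPacked, sum_Iio_add_eq_sum_Iic]
  exact sum_le_sum_of_subset_of_nonneg (fun l hl => mem_Iio.2 ((mem_Iic.1 hl).trans_lt hk))
    fun l _ _ => hw l

lemma leftPacked_add_le_sum [Fintype ι] (hw : ∀ k, 0 ≤ w k) (k : ι) :
    leftPacked w k + w k ≤ ∑ l, w l := by
  rw [leftPacked, sum_Iio_add_eq_sum_Iic]
  exact sum_le_univ_sum_of_nonneg hw

end LocallyFiniteOrderBot

section LocallyFiniteOrderTop

variable [LocallyFiniteOrderTop ι] {W : ℝ}

lemma rightPacked_add_eq (k : ι) : rightPacked W v k + v k = W - ∑ l ∈ Ioi k, v l := by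
  rw [rightPacked, ← add_sum_Ioi_eq_sum_Ici]
  ring

lemma rightPacked_add_le_self (hv : ∀ k, 0 ≤ v k) (k : ι) : rightPacked W v k + v k ≤ W := by
  rw [rightPacked_add_eq]
  exact sub_le_self W (sum_nonneg fun l _ => hv l)

lemma rightPacked_add_le (hv : ∀ k, 0 ≤ v k) {k k' : ι} (hk : k < k') :
    rightPacked W v k + v k ≤ rightPacked W v k' := by
  rw [rightPacked_add_eq, rightPacked]
  refine sub_le_sub_left (sum_le_sum_of_subset_of_nonneg ?_ fun l _ _ => hv l) W
  exact fun l hl => mem_Ioi.2 (hk.trans_le (mem_Ici.1 hl))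

lemma sub_sum_le_rightPacked [Fintype ι] (hv : ∀ k, 0 ≤ v k) (k : ι) :
    W - ∑ l, v l ≤ rightPacked W v k :=
  sub_le_sub_left (sum_le_univ_sum_of_nonneg hv) W

end LocallyFiniteOrderTop

end Packing

lemma Set.disjoint_Ico_add_of_le_or_le {a b u v : ℝ} (h : a + u ≤ b ∨ b + v ≤ a) :
    Disjoint (Set.Ico a (a + u)) (Set.Ico b (b + v)) := by
  rcases h with h | h
  · exact Set.Ico_disjoint_Ico_same.mono_left (Set.Ico_subset_Ico_right h)
  · exact (Set.Ico_disjoint_Ico_same.mono_left (Set.Ico_subset_Ico_right h)).symm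

lemma sum_le_of_pairwiseDisjoint_Ico {ι : Type*} {W : ℝ} (hW : 0 ≤ W) (s : Finset ι)
    (x w : ι → ℝ) (hw : ∀ i ∈ s, 0 ≤ w i) (hbox : ∀ i ∈ s, 0 ≤ x i ∧ x i + w i ≤ W)
    (hdisj : (s : Set ι).PairwiseDisjoint fun i => Set.Ico (x i) (x i + w i)) :
    ∑ i ∈ s, w i ≤ W := by
  have hvol : volume (⋃ i ∈ s, Set.Ico (x i) (x i + w i)) ≤ volume (Set.Ico 0 W) :=
    measure_mono <| Set.iUnion₂_subset fun i hi => Set.Ico_subset_Ico (hbox i hi).1 (hbox i hi).2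
  rw [measure_biUnion_finset hdisj fun i _ => measurableSet_Ico, Real.volume_Ico, sub_zero]
    at hvol
  simp_rw [Real.volume_Ico, add_sub_cancel_left] at hvol
  rwa [← ENNReal.ofReal_sum_of_nonneg hw, ENNReal.ofReal_le_ofReal_iff hW] at hvol

namespace FeasiblePlacement

variable {W h : ℝ} {n m : ℕ} {w a : Fin n → ℝ} {v b : Fin m → ℝ} {x : Fin n → ℝ} {y : Fin m → ℝ}

theorem comp_perm (hfeas : FeasiblePlacement W h w a v b x y)
    (σ : Equiv.Perm (Fin n)) (τ : Equiv.Perm (Fin m)) :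
    FeasiblePlacement W h (w ∘ σ) (a ∘ σ) (v ∘ τ) (b ∘ τ) (x ∘ σ) (y ∘ τ) :=
  ⟨fun i => hfeas.1 (σ i), fun j => hfeas.2.1 (τ j),
    fun _ _ hne => hfeas.2.2.1 _ _ (σ.injective.ne hne),
    fun _ _ hne => hfeas.2.2.2.1 _ _ (τ.injective.ne hne), fun i j => hfeas.2.2.2.2 (σ i) (τ j)⟩

theorem sum_bottom_le (hW : 0 ≤ W) (hw : ∀ i, 0 ≤ w i)
    (hfeas : FeasiblePlacement W h w a v b x y) :
    ∑ i, w i ≤ W :=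
  sum_le_of_pairwiseDisjoint_Ico hW univ x w (fun i _ => hw i) (fun i _ => hfeas.1 i)
    fun i _ i' _ hne => Set.disjoint_Ico_add_of_le_or_le (hfeas.2.2.1 i i' hne)

theorem sum_top_le (hW : 0 ≤ W) (hv : ∀ j, 0 ≤ v j)
    (hfeas : FeasiblePlacement W h w a v b x y) :
    ∑ j, v j ≤ W :=
  sum_le_of_pairwiseDisjoint_Ico hW univ y v (fun j _ => hv j) (fun j _ => hfeas.2.1 j)
    fun j _ j' _ hne => Set.disjoint_Ico_add_of_le_or_le (hfeas.2.2.2.1 j j' hne)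

theorem exists_overlap_of_lt_sum_add_sum (hW : 0 ≤ W) (hw : ∀ i, 0 ≤ w i) (hv : ∀ j, 0 ≤ v j)
    (hfeas : FeasiblePlacement W h w a v b x y) (s : Finset (Fin n)) (t : Finset (Fin m))
    (hst : W < ∑ i ∈ s, w i + ∑ j ∈ t, v j) :
    ∃ i ∈ s, ∃ j ∈ t, x i < y j + v j ∧ y j < x i + w i := by
  by_contra! hsep
  refine hst.not_ge ?_
  rw [← sum_sumElim]
  refine sum_le_of_pairwiseDisjoint_Ico hW _ (Sum.elim x y) _ ?_ ?_ ?_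
  · rintro (i | j) _ <;> simp [hw, hv]
  · rintro (i | j) _ <;> simp [hfeas.1, hfeas.2.1]
  rintro (i | j) hi (i' | j') hi' hne
    <;> simp only [mem_coe, inl_mem_disjSum, inr_mem_disjSum] at hi hi'
    <;> apply Set.disjoint_Ico_add_of_le_or_le
  · exact hfeas.2.2.1 i i' (ne_of_apply_ne _ hne)
  · exact (le_or_gt (y j' + v j') (x i)).elim .inr fun hij => .inl (hsep i hi j' hi' hij)
  · exact (le_or_gt (y j + v j) (x i')).elim .inl fun hij => .inr (hsep i' hi' j hi hij)
  · exact hfeas.2.2.2.1 j j' (ne_of_apply_ne _ hne)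

theorem packed (hW : 0 ≤ W) (hw : ∀ i, 0 ≤ w i) (hv : ∀ j, 0 ≤ v j) (ha : Antitone a)
    (hb : Monotone b) (hfeas : FeasiblePlacement W h w a v b x y) :
    FeasiblePlacement W h w a v b (leftPacked w) (rightPacked W v) := by
  refine ⟨fun i => ⟨leftPacked_nonneg hw i,
      (leftPacked_add_le_sum hw i).trans (hfeas.sum_bottom_le hW hw)⟩,
    fun j => ⟨(sub_nonneg.2 (hfeas.sum_top_le hW hv)).trans (sub_sum_le_rightPacked hv j),
      rightPacked_add_le_self hv j⟩, ?_, ?_, ?_⟩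
  · intro i i' hne
    rcases hne.lt_or_gt with hlt | hlt
    exacts [.inl (leftPacked_add_le hw hlt), .inr (leftPacked_add_le hw hlt)]
  · intro j j' hne
    rcases hne.lt_or_gt with hlt | hlt
    exacts [.inl (rightPacked_add_le hv hlt), .inr (rightPacked_add_le hv hlt)]
  · intro i j _ hji
    have hwide : W < ∑ k ∈ Iic i, w k + ∑ l ∈ Ici j, v l := by
      rw [leftPacked, rightPacked] at hji
      rw [← sum_Iio_add_eq_sum_Iic]
      linarith
    obtain ⟨k, hk, l, hl, hkl⟩ := hfeas.exists_overlap_of_lt_sum_add_sum hW hw hv _ _ hwide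
    calc a i + b j ≤ a k + b l := add_le_add (ha (mem_Iic.1 hk)) (hb (mem_Ici.1 hl))
      _ ≤ h := hfeas.2.2.2.2 k l hkl.1 hkl.2

end FeasiblePlacement

theorem sorted_placement_feasible_general
    (W h : ℝ) (hW : 0 < W)
    (n m : ℕ) (w a : Fin n → ℝ) (v b : Fin m → ℝ)
    (hw : ∀ i, 0 < w i)
    (hv : ∀ j, 0 < v j)
    (x₀ : Fin n → ℝ) (y₀ : Fin m → ℝ)
    (hfeas : FeasiblePlacement W h w a v b x₀ y₀)
    (πb : Equiv.Perm (Fin n)) (πt : Equiv.Perm (Fin m))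
    (hπb : Antitone (fun k => a (πb k))) (hπt : Monotone (fun k => b (πt k))) :
    FeasiblePlacement W h w a v b
      (fun i => ∑ k ∈ Finset.univ.filter (fun k => k < πb.symm i), w (πb k))
      (fun j => W - ∑ k ∈ Finset.univ.filter (fun k => πt.symm j ≤ k), v (πt k)) := by
  have hsorted := (hfeas.comp_perm πb πt).packed hW.le (fun k => (hw (πb k)).le)
    (fun k => (hv (πt k)).le) hπb hπt
  simpa [Function.comp_assoc, Function.comp_def, leftPacked, rightPacked, filter_gt_eq_Iio,
    filter_le_eq_Ici] using hsorted.comp_perm πb.symm πt.symm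

/-- **Sorting bottom items by non-increasing height and top items (right-justified)
by non-decreasing height yields a feasible placement whenever any feasible
placement exists.** -/
theorem sorted_placement_feasible
    (W h : ℝ) (hW : 0 < W) (hh : 0 < h)
    (n m : ℕ) (w a : Fin n → ℝ) (v b : Fin m → ℝ)
    (hw : ∀ i, 0 < w i) (ha : ∀ i, 0 < a i ∧ a i ≤ h)
    (hv : ∀ j, 0 < v j) (hb : ∀ j, 0 < b j ∧ b j ≤ h)
    (x₀ : Fin n → ℝ) (y₀ : Fin m → ℝ)
    (hfeas : FeasiblePlacement W h w a v b x₀ y₀)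
    (πb : Equiv.Perm (Fin n)) (πt : Equiv.Perm (Fin m))
    (hπb : Antitone (fun k => a (πb k))) (hπt : Monotone (fun k => b (πt k))) :
    FeasiblePlacement W h w a v b
      (fun i => ∑ k ∈ Finset.univ.filter (fun k => k < πb.symm i), w (πb k))
      (fun j => W - ∑ k ∈ Finset.univ.filter (fun k => πt.symm j ≤ k), v (πt k)) :=
  sorted_placement_feasible_general W h hW n m w a v b hw hv x₀ y₀ hfeas πb πt hπb hπt
end

section
/- Let W, OPT > 0 and 0 < μ < 1. Let B be a box of width w(B) ≥ μW and height h(B) ≥ μ·OPT, and let S be a finite set of items, each of width at most μW and height at most μ·OPT. If the Next Fit Decreasing Height algorithm applied to S in B fails to place all items of S, then the total area of the items it does place in B is at least w(B)·h(B) − μW·h(B) − 2μ·OPT·w(B); in particular, the uncovered area of B is at most μW·h(B) + 2μ·OPT·w(B) ≤ 3μ·W·OPT. -/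
open scoped Classical

/-- The state of the Next Fit Decreasing Height algorithm: current horizontal
position on the open shelf, the bottom of the open shelf, the height of the open
shelf (the height of its first = tallest item), the total area of placed items,
and whether the algorithm has stopped because the next shelf would not fit. -/
structure NFDHState where
  xpos : ℝ
  ypos : ℝ
  shelfH : ℝ
  placedArea : ℝ
  failed : Bool

/-- One step of NFDH in a box of width `Wb` and height `Hb`, processing the item
`it = (width, height)`: place it on the current shelf if it fits, otherwise open a
new shelf on top of the current one; stop if the new shelf would exceed the box. -/
noncomputable def nfdhStep (Wb Hb : ℝ) (st : NFDHState) (it : ℝ × ℝ) : NFDHState :=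
  if st.failed then st
  else if st.xpos + it.1 ≤ Wb ∧ st.ypos + it.2 ≤ Hb then
    { st with
        xpos := st.xpos + it.1
        shelfH := max st.shelfH it.2
        placedArea := st.placedArea + it.1 * it.2 }
  else if st.ypos + st.shelfH + it.2 ≤ Hb then
    { xpos := it.1
      ypos := st.ypos + st.shelfH
      shelfH := it.2
      placedArea := st.placedArea + it.1 * it.2
      failed := false }
  else
    { st with failed := true }

/-- Running NFDH on a list of items (given in order of non-increasing height). -/
noncomputable def nfdhRun (Wb Hb : ℝ) (items : List (ℝ × ℝ)) : NFDHState :=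
  items.foldl (nfdhStep Wb Hb) ⟨0, 0, 0, 0, false⟩

/-!
Every item has width at most `wmax`, so a shelf that is closed because its next item does not
fit is filled to width more than `Wb - wmax`; every item on it is at least as tall as the first
item of the next shelf, which is the height of that next shelf. Charging each closed shelf
against the shelf above it, the shelves together cover area at least `(Wb - wmax)` times their
total height minus the height of the first shelf. When the algorithm stops, the shelves reach
above `Hb - 2 hmax`, giving the bound `(Wb - wmax) (Hb - 2 hmax)`.
-/

/-- In the open case, `- hmax` discounts the first shelf, which no closed shelf pays for, and
`st.xpos * it.2` is paid by the items on the open shelf. -/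
def NFDHState.AreaInv (Wb Hb wmax hmax : ℝ) (st : NFDHState) (rest : List (ℝ × ℝ)) : Prop :=
  if st.failed then (Wb - wmax) * (Hb - 2 * hmax) ≤ st.placedArea
  else 0 ≤ st.xpos ∧ ∀ it ∈ rest, it.2 ≤ st.shelfH ∧
    (Wb - wmax) * (st.ypos + st.shelfH - hmax) + st.xpos * it.2 ≤ st.placedArea

namespace NFDHState.AreaInv

variable {Wb Hb wmax hmax : ℝ} {st : NFDHState} {x : ℝ × ℝ} {rest : List (ℝ × ℝ)}

theorem nfdhStep (hw : wmax ≤ Wb) (hx₁ : x.1 ∈ Set.Icc 0 wmax)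
    (hx₂ : x.2 ∈ Set.Icc 0 hmax)
    (hsorted : ∀ it ∈ rest, it.2 ≤ x.2) (hinv : st.AreaInv Wb Hb wmax hmax (x :: rest)) :
    (nfdhStep Wb Hb st x).AreaInv Wb Hb wmax hmax rest := by
  obtain ⟨hx₁0, hx₁w⟩ := hx₁
  by_cases hf : st.failed
  · simpa [_root_.nfdhStep, AreaInv, hf] using hinv
  simp only [AreaInv, hf, Bool.false_eq_true, if_false] at hinv
  obtain ⟨hxpos, hinv⟩ := hinv
  obtain ⟨hxs, hxarea⟩ := hinv x List.mem_cons_self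
  have hmono {c : ℝ} (hc : 0 ≤ c) (it) (hit : it ∈ rest) : c * it.2 ≤ c * x.2 :=
    mul_le_mul_of_nonneg_left (hsorted it hit) hc
  by_cases hfit : st.xpos + x.1 ≤ Wb ∧ st.ypos + x.2 ≤ Hb
  · simp only [_root_.nfdhStep, hf, hfit, AreaInv, max_eq_left hxs, Bool.false_eq_true,
      and_self, if_true, if_false]
    refine ⟨by linarith, fun it hit => ⟨(hsorted it hit).trans hxs, ?_⟩⟩
    linarith [hmono hxpos it hit, hmono hx₁0 it hit]
  by_cases hnew : st.ypos + st.shelfH + x.2 ≤ Hb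
  · -- the item fits vertically, so the shelf is closed because it is full up to `Wb - wmax`
    have hfull : Wb - wmax ≤ st.xpos := by
      by_contra! h
      exact hfit ⟨by linarith, by linarith [hx₂.1]⟩
    simp only [_root_.nfdhStep, hf, hfit, hnew, AreaInv, Bool.false_eq_true, if_true, if_false]
    refine ⟨hx₁0, fun it hit => ⟨hsorted it hit, ?_⟩⟩
    linarith [hmono hx₁0 it hit, mul_le_mul_of_nonneg_right hfull hx₂.1]
  · simp only [_root_.nfdhStep, hf, hfit, hnew, AreaInv, Bool.false_eq_true, if_true, if_false]
    have htop : Hb - 2 * hmax ≤ st.ypos + st.shelfH - hmax := by linarith [hx₂.2]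
    linarith [mul_le_mul_of_nonneg_left htop (sub_nonneg.2 hw), mul_nonneg hxpos hx₂.1]


theorem foldl_nfdhStep (hw : wmax ≤ Wb) {items : List (ℝ × ℝ)}
    (hwidth : ∀ it ∈ items, it.1 ∈ Set.Icc 0 wmax)
    (hheight : ∀ it ∈ items, it.2 ∈ Set.Icc 0 hmax)
    (hsorted : items.Pairwise (fun p q : ℝ × ℝ => q.2 ≤ p.2))
    (hinv : st.AreaInv Wb Hb wmax hmax items) :
    (items.foldl (_root_.nfdhStep Wb Hb) st).AreaInv Wb Hb wmax hmax [] := by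
  induction items generalizing st with
  | nil => exact hinv
  | cons x rest ih =>
    rw [List.pairwise_cons] at hsorted
    simp only [List.forall_mem_cons] at hwidth hheight
    exact ih hwidth.2 hheight.2 hsorted.2
      (hinv.nfdhStep hw hwidth.1 hheight.1 hsorted.1)

/-- The first item always fits, and then opens a shelf at least as tall as every later item. -/
theorem nfdhStep_init (hw : wmax ≤ Wb) (hh : hmax ≤ Hb) (hx₁ : x.1 ∈ Set.Icc 0 wmax)
    (hx₂ : x.2 ∈ Set.Icc 0 hmax) (hsorted : ∀ it ∈ rest, it.2 ≤ x.2) :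
    (_root_.nfdhStep Wb Hb ⟨0, 0, 0, 0, false⟩ x).AreaInv Wb Hb wmax hmax rest := by
  have hfit : 0 + x.1 ≤ Wb ∧ 0 + x.2 ≤ Hb := ⟨by linarith [hx₁.2], by linarith [hx₂.2]⟩
  simp only [_root_.nfdhStep, hfit, AreaInv, and_self, Bool.false_eq_true, if_true, if_false]
  refine ⟨by linarith [hx₁.1], fun it hit => ⟨(hsorted it hit).trans (le_max_right _ _), ?_⟩⟩
  have hshelf : max 0 x.2 ≤ hmax := max_le (hx₂.1.trans hx₂.2) hx₂.2
  linarith [mul_le_mul_of_nonneg_left (hsorted it hit) hx₁.1,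
    mul_nonpos_of_nonneg_of_nonpos (sub_nonneg.2 hw) (sub_nonpos.2 hshelf)]

end NFDHState.AreaInv

theorem placedArea_ge_of_nfdhRun_failed {Wb Hb wmax hmax : ℝ} (hw : wmax ≤ Wb)
    (hh : hmax ≤ Hb) {items : List (ℝ × ℝ)} (hwidth : ∀ it ∈ items, it.1 ∈ Set.Icc 0 wmax)
    (hheight : ∀ it ∈ items, it.2 ∈ Set.Icc 0 hmax)
    (hsorted : items.Pairwise (fun p q : ℝ × ℝ => q.2 ≤ p.2))
    (hfail : (nfdhRun Wb Hb items).failed = true) :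
    (Wb - wmax) * (Hb - 2 * hmax) ≤ (nfdhRun Wb Hb items).placedArea := by
  cases items with
  | nil => simp [nfdhRun] at hfail
  | cons x rest =>
    rw [List.pairwise_cons] at hsorted
    simp only [List.forall_mem_cons] at hwidth hheight
    have hinv := (NFDHState.AreaInv.nfdhStep_init hw hh hwidth.1 hheight.1
      hsorted.1).foldl_nfdhStep hw hwidth.2 hheight.2 hsorted.2
    rw [nfdhRun, List.foldl_cons] at hfail ⊢
    simpa [NFDHState.AreaInv, hfail] using hinv

theorem nfdh_area_bound_general
    (W OPT μ Wb Hb : ℝ) (hW : 0 < W) (hOPT : 0 < OPT) (hμ0 : 0 < μ)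
    (hWb : μ * W ≤ Wb) (hHb : μ * OPT ≤ Hb) (hWbW : Wb ≤ W) (hHbOPT : Hb ≤ OPT)
    (items : List (ℝ × ℝ))
    (hpos : ∀ it ∈ items, 0 < it.1 ∧ 0 < it.2)
    (hsize : ∀ it ∈ items, it.1 ≤ μ * W ∧ it.2 ≤ μ * OPT)
    (hsorted : List.Pairwise (fun p q : ℝ × ℝ => q.2 ≤ p.2) items)
    (hfail : (nfdhRun Wb Hb items).failed = true) :
    Wb * Hb - μ * W * Hb - 2 * μ * OPT * Wb ≤ (nfdhRun Wb Hb items).placedArea ∧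
    Wb * Hb - (nfdhRun Wb Hb items).placedArea ≤ μ * W * Hb + 2 * μ * OPT * Wb ∧
    μ * W * Hb + 2 * μ * OPT * Wb ≤ 3 * μ * W * OPT := by
  have harea := placedArea_ge_of_nfdhRun_failed hWb hHb
    (fun it hit => ⟨(hpos it hit).1.le, (hsize it hit).1⟩)
    (fun it hit => ⟨(hpos it hit).2.le, (hsize it hit).2⟩) hsorted hfail
  have hμW : 0 ≤ μ * W := by positivity
  have hμOPT : 0 ≤ μ * OPT := by positivity
  have hlower : Wb * Hb - μ * W * Hb - 2 * μ * OPT * Wb ≤ (nfdhRun Wb Hb items).placedArea := by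
    linarith [mul_nonneg hμW hμOPT]
  refine ⟨hlower, by linarith, ?_⟩
  linarith [mul_le_mul_of_nonneg_left hHbOPT hμW, mul_le_mul_of_nonneg_left hWbW hμOPT]

/-- **Area guarantee of NFDH.** If NFDH in a box of width `Wb ≥ μW` and height
`Hb ≥ μ·OPT` fails to place all items (each of width `≤ μW` and height `≤ μ·OPT`),
then the placed area is at least `Wb·Hb − μW·Hb − 2μ·OPT·Wb`; in particular, the
uncovered area is at most `μW·Hb + 2μ·OPT·Wb ≤ 3μ·W·OPT`. -/
theorem nfdh_area_bound
    (W OPT μ Wb Hb : ℝ) (hW : 0 < W) (hOPT : 0 < OPT) (hμ0 : 0 < μ) (hμ1 : μ < 1)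
    (hWb : μ * W ≤ Wb) (hHb : μ * OPT ≤ Hb) (hWbW : Wb ≤ W) (hHbOPT : Hb ≤ OPT)
    (items : List (ℝ × ℝ))
    (hpos : ∀ it ∈ items, 0 < it.1 ∧ 0 < it.2)
    (hsize : ∀ it ∈ items, it.1 ≤ μ * W ∧ it.2 ≤ μ * OPT)
    (hsorted : List.Pairwise (fun p q : ℝ × ℝ => q.2 ≤ p.2) items)
    (hfail : (nfdhRun Wb Hb items).failed = true) :
    Wb * Hb - μ * W * Hb - 2 * μ * OPT * Wb ≤ (nfdhRun Wb Hb items).placedArea ∧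
    Wb * Hb - (nfdhRun Wb Hb items).placedArea ≤ μ * W * Hb + 2 * μ * OPT * Wb ∧
    μ * W * Hb + 2 * μ * OPT * Wb ≤ 3 * μ * W * OPT :=
  nfdh_area_bound_general W OPT μ Wb Hb hW hOPT hμ0 hWb hHb hWbW hHbOPT items hpos hsize hsorted
    hfail
end
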